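/- Uniform decay of the image of compactly supported functions (the paper's estimates (2.5)–(2.6), Euclidean case): let N ≥ 1, 1 < p ≤ q < ∞, 0 < λ < N, α, β ∈ ℝ with β < N/p′ (p′ = p/(p−1)) and (α + λ) q > N. Then for every fixed R > 0, lim_{M → ∞} sup_{f ∈ L^p(ℝ^N), ‖f‖_{L^p} ≤ 1} ‖S(f χ_{B(R)}) · χ_{ℝ^N ∖ B(M)}‖_{L^q(ℝ^N)} = 0. -/

import Mathlib

/-!
For `|u| ≥ M ≥ 2R` and `|v| < R` we have `|u - v| ≥ |u| / 2`, so the kernel is at most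
`2^λ |u|^{-(α+λ)} |v|^{-β}`. By Hölder,
`|S(f χ_{B(R)})(u)| ≤ 2^λ ‖f‖_p ‖|·|^{-β}‖_{L^{p'}(B(R))} |u|^{-(α+λ)}`,
and the middle factor is finite because `β p' < N`. So, uniformly in `f`, the quantity is bounded
by a constant times the `L^q` norm of `|u|^{-(α+λ)}` outside `B(M)`; since `(α + λ) q > N` this
function is in `L^q` outside `B(1)`, hence its norm outside `B(M)` tends to `0`.
-/

open MeasureTheory Filter ENNReal Metric

/-- The Stein–Weiss operator `Sg(u) = ∫ g(v) / (|u|^α |u−v|^λ |v|^β) dv` on `ℝ^N`. -/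
noncomputable def steinWeiss {N : ℕ} (α β lam : ℝ) (g : EuclideanSpace ℝ (Fin N) → ℝ)
    (u : EuclideanSpace ℝ (Fin N)) : ℝ :=
  ∫ v, g v / (‖u‖ ^ α * ‖u - v‖ ^ lam * ‖v‖ ^ β)

open Set Module Topology

section NormRpow

variable {E : Type*} [NormedAddCommGroup E] [NormedSpace ℝ E] [FiniteDimensional ℝ E]
  [MeasurableSpace E] [BorelSpace E] {μ : Measure E} [μ.IsAddHaarMeasure]
  {p : ℝ≥0∞}

lemma memLp_norm_rpow_neg_restrict_ball (hd : 1 ≤ finrank ℝ E) (hp0 : p ≠ 0) (hp : p ≠ ∞)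
    {s : ℝ} (hs : s * p.toReal < finrank ℝ E) (R : ℝ) :
    MemLp (fun x : E => ‖x‖ ^ (-s)) p (μ.restrict (ball 0 R)) := by
  have hmeas : AEStronglyMeasurable (fun x : E => ‖x‖ ^ (-s)) (μ.restrict (ball 0 R)) :=
    (by fun_prop : Measurable fun x : E => ‖x‖ ^ (-s)).aestronglyMeasurable
  refine (integrable_norm_rpow_iff hmeas hp0 hp).1 ?_
  have hpow : ∀ x : E, ‖‖x‖ ^ (-s)‖ ^ p.toReal = ‖x‖ ^ (-(s * p.toReal)) := fun x => by
    rw [Real.norm_of_nonneg (by positivity), ← Real.rpow_mul (norm_nonneg x), neg_mul]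
  simp_rw [hpow]
  exact integrableOn_ball_of_norm_le_rpow (C := 1) hd hs
    (.of_forall fun x => by rw [one_mul, Real.norm_of_nonneg (by positivity)])
    (by fun_prop : Measurable fun x : E => ‖x‖ ^ (-(s * p.toReal))).aestronglyMeasurable

lemma memLp_norm_rpow_neg_restrict_compl_ball (hp0 : p ≠ 0) (hp : p ≠ ∞)
    {t : ℝ} (ht : finrank ℝ E < t * p.toReal) {r : ℝ} (hr : 0 < r) :
    MemLp (fun x : E => ‖x‖ ^ (-t)) p (μ.restrict (ball 0 r)ᶜ) := by
  have hmeas : AEStronglyMeasurable (fun x : E => ‖x‖ ^ (-t)) (μ.restrict (ball 0 r)ᶜ) :=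
    (by fun_prop : Measurable fun x : E => ‖x‖ ^ (-t)).aestronglyMeasurable
  refine (integrable_norm_rpow_iff hmeas hp0 hp).1 ?_
  set σ := t * p.toReal
  have hσ : 0 < σ := lt_of_le_of_lt (Nat.cast_nonneg _) ht
  have hpow : ∀ x : E, ‖‖x‖ ^ (-t)‖ ^ p.toReal = ‖x‖ ^ (-σ) := fun x => by
    rw [Real.norm_of_nonneg (by positivity), ← Real.rpow_mul (norm_nonneg x), neg_mul]
  simp_rw [hpow]
  refine ((integrable_one_add_norm (μ := μ) ht).const_mul ((1 + r⁻¹) ^ σ)).integrableOn.mono'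
    (by fun_prop : Measurable fun x : E => ‖x‖ ^ (-σ)).aestronglyMeasurable
    (ae_restrict_of_forall_mem measurableSet_ball.compl fun x hx => ?_)
  have hrx : r ≤ ‖x‖ := by simpa using hx
  have hx0 : 0 < ‖x‖ := hr.trans_le hrx
  have hle : 1 + ‖x‖ ≤ (1 + r⁻¹) * ‖x‖ := by
    have : 1 ≤ r⁻¹ * ‖x‖ := by rw [inv_mul_eq_div]; exact (one_le_div hr).2 hrx
    linarith
  calc ‖‖x‖ ^ (-σ)‖ = (1 + r⁻¹) ^ σ * ((1 + r⁻¹) * ‖x‖) ^ (-σ) := by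
        rw [Real.norm_of_nonneg (by positivity), Real.mul_rpow (by positivity) hx0.le,
          ← mul_assoc, ← Real.rpow_add (by positivity), add_neg_cancel, Real.rpow_zero, one_mul]
    _ ≤ (1 + r⁻¹) ^ σ * (1 + ‖x‖) ^ (-σ) := by
        have := Real.rpow_le_rpow_of_nonpos (by positivity) hle (neg_nonpos.2 hσ.le)
        gcongr

end NormRpow

lemma tendsto_eLpNorm_restrict_of_antitone {α ι F : Type*} [MeasurableSpace α] {μ : Measure α}
    [NormedAddCommGroup F] [Preorder ι] [IsCountablyGenerated (atTop : Filter ι)]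
    {f : α → F} {p : ℝ≥0∞} (hp0 : p ≠ 0) (hp : p ≠ ∞) {s : ι → Set α}
    (hs : ∀ i, MeasurableSet (s i)) (hanti : Antitone s) (hempty : ⋂ i, s i = ∅)
    {i₀ : ι} (hf : MemLp f p (μ.restrict (s i₀))) :
    Tendsto (fun i => eLpNorm f p (μ.restrict (s i))) atTop (𝓝 0) := by
  set ν := μ.withDensity fun x => ‖f x‖ₑ ^ p.toReal
  have hν : ∀ i, eLpNorm f p (μ.restrict (s i)) = ν (s i) ^ (1 / p.toReal) := fun i => by
    rw [eLpNorm_eq_lintegral_rpow_enorm_toReal hp0 hp, withDensity_apply _ (hs i)]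
  have hfin : ν (s i₀) ≠ ∞ := by
    rw [withDensity_apply _ (hs i₀)]
    exact (lintegral_rpow_enorm_lt_top_of_eLpNorm_lt_top hp0 hp hf.eLpNorm_lt_top).ne
  have hlim : Tendsto (ν ∘ s) atTop (𝓝 0) := by
    simpa [hempty] using tendsto_measure_iInter_atTop (fun i => (hs i).nullMeasurableSet) hanti
      ⟨i₀, hfin⟩
  simp_rw [hν]
  have h0 : (0 : ℝ≥0∞) ^ (1 / p.toReal) = 0 :=
    ENNReal.zero_rpow_of_pos (one_div_pos.2 (ENNReal.toReal_pos hp0 hp))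
  exact h0 ▸ (ENNReal.continuous_rpow_const.tendsto 0).comp hlim

lemma tendsto_eLpNorm_restrict_compl_ball {X F : Type*} [PseudoMetricSpace X] [MeasurableSpace X]
    [OpensMeasurableSpace X] {μ : Measure X} [NormedAddCommGroup F] {f : X → F} {p : ℝ≥0∞}
    (hp0 : p ≠ 0) (hp : p ≠ ∞) {x : X} {r : ℝ} (hf : MemLp f p (μ.restrict (ball x r)ᶜ)) :
    Tendsto (fun M => eLpNorm f p (μ.restrict (ball x M)ᶜ)) atTop (𝓝 0) := by
  refine tendsto_eLpNorm_restrict_of_antitone hp0 hp (fun M => measurableSet_ball.compl)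
    (fun _ _ h => compl_subset_compl.2 (ball_subset_ball h)) ?_ hf
  rw [← compl_iUnion, compl_empty_iff]
  exact eq_univ_of_forall fun y => mem_iUnion.2 ⟨dist y x + 1, by simp⟩

lemma inv_rpow_mul_norm_sub_rpow_le {E : Type*} [SeminormedAddCommGroup E] {u v : E}
    {α lam : ℝ} (hlam : 0 ≤ lam) (hu : 0 < ‖u‖) (huv : 2 * ‖v‖ ≤ ‖u‖) :
    (‖u‖ ^ α * ‖u - v‖ ^ lam)⁻¹ ≤ 2 ^ lam * ‖u‖ ^ (-(α + lam)) := by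
  have hsub : ‖u‖ / 2 ≤ ‖u - v‖ := by linarith [norm_sub_norm_le u v]
  calc (‖u‖ ^ α * ‖u - v‖ ^ lam)⁻¹ ≤ (‖u‖ ^ α * (‖u‖ / 2) ^ lam)⁻¹ := by
        gcongr
    _ = 2 ^ lam * ‖u‖ ^ (-(α + lam)) := by
        rw [Real.div_rpow hu.le zero_le_two, Real.rpow_neg hu.le, Real.rpow_add hu]
        field_simp

lemma enorm_steinWeiss_indicator_ball_le {N : ℕ} {α β lam R : ℝ} (hlam : 0 ≤ lam)
    (hR : 0 < R) {p p' : ℝ≥0∞} [p.HolderConjugate p'] {f : EuclideanSpace ℝ (Fin N) → ℝ}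
    (hf : AEStronglyMeasurable f volume) {u : EuclideanSpace ℝ (Fin N)} (hu : 2 * R ≤ ‖u‖) :
    ‖steinWeiss α β lam ((ball 0 R).indicator f) u‖ₑ ≤
      ENNReal.ofReal (2 ^ lam * ‖u‖ ^ (-(α + lam))) * (eLpNorm f p volume *
        eLpNorm (fun v => ‖v‖ ^ (-β)) p'
          (volume.restrict (ball (0 : EuclideanSpace ℝ (Fin N)) R))) := by
  set c := 2 ^ lam * ‖u‖ ^ (-(α + lam))
  set W : EuclideanSpace ℝ (Fin N) → ℝ := fun v => ‖v‖ ^ (-β)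
  have hpt : ∀ v ∈ ball (0 : EuclideanSpace ℝ (Fin N)) R,
      ‖f v / (‖u‖ ^ α * ‖u - v‖ ^ lam * ‖v‖ ^ β)‖ₑ ≤ ENNReal.ofReal c * ‖(f • W) v‖ₑ := by
    intro v hv
    have hkernel : (‖u‖ ^ α * ‖u - v‖ ^ lam)⁻¹ ≤ c :=
      inv_rpow_mul_norm_sub_rpow_le hlam (by linarith)
        (by linarith [mem_ball_zero_iff.1 hv])
    have hreal : ‖f v / (‖u‖ ^ α * ‖u - v‖ ^ lam * ‖v‖ ^ β)‖ ≤ c * ‖f v * W v‖ := by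
      have hden : 0 ≤ ‖u‖ ^ α * ‖u - v‖ ^ lam * ‖v‖ ^ β := by positivity
      rw [norm_div, norm_mul (f v), Real.norm_of_nonneg (by positivity : (0 : ℝ) ≤ W v),
        Real.norm_of_nonneg hden, div_eq_mul_inv, mul_inv, ← Real.rpow_neg (norm_nonneg v)]
      calc ‖f v‖ * ((‖u‖ ^ α * ‖u - v‖ ^ lam)⁻¹ * W v)
          = (‖u‖ ^ α * ‖u - v‖ ^ lam)⁻¹ * (‖f v‖ * W v) := by ring
        _ ≤ c * (‖f v‖ * W v) := by gcongr
    rw [← ofReal_norm, ← ofReal_norm, ← ENNReal.ofReal_mul (by positivity)]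
    exact ENNReal.ofReal_le_ofReal hreal
  have hW : AEStronglyMeasurable W (volume.restrict (ball 0 R)) :=
    (by fun_prop : Measurable W).aestronglyMeasurable
  calc ‖steinWeiss α β lam ((ball 0 R).indicator f) u‖ₑ
      ≤ ∫⁻ v, ‖(ball 0 R).indicator f v / (‖u‖ ^ α * ‖u - v‖ ^ lam * ‖v‖ ^ β)‖ₑ :=
        enorm_integral_le_lintegral_enorm _
    _ = ∫⁻ v in ball 0 R, ‖f v / (‖u‖ ^ α * ‖u - v‖ ^ lam * ‖v‖ ^ β)‖ₑ := by
        rw [← lintegral_indicator measurableSet_ball]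
        congr 1 with v
        by_cases hv : v ∈ ball (0 : EuclideanSpace ℝ (Fin N)) R <;> simp [hv]
    _ ≤ ∫⁻ v in ball 0 R, ENNReal.ofReal c * ‖(f • W) v‖ₑ :=
        setLIntegral_mono' measurableSet_ball hpt
    _ = ENNReal.ofReal c * eLpNorm (f • W) 1 (volume.restrict (ball 0 R)) := by
        rw [lintegral_const_mul' _ _ ofReal_ne_top, eLpNorm_one_eq_lintegral_enorm]
    _ ≤ ENNReal.ofReal c * (eLpNorm f p (volume.restrict (ball 0 R)) *
          eLpNorm W p' (volume.restrict (ball 0 R))) := by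
        gcongr
        exact eLpNorm_smul_le_mul_eLpNorm hW hf.restrict
    _ ≤ _ := by
        gcongr _ * (?_ * _)
        exact eLpNorm_restrict_le _ _ _ _

lemma eLpNorm_indicator_compl_ball_steinWeiss_le {N : ℕ} {α β lam R M : ℝ} (hlam : 0 ≤ lam)
    (hR : 0 < R) (hM : 2 * R ≤ M) {p p' : ℝ≥0∞} [p.HolderConjugate p'] (q : ℝ≥0∞)
    {f : EuclideanSpace ℝ (Fin N) → ℝ} (hf : AEStronglyMeasurable f volume) :
    eLpNorm ((ball 0 M)ᶜ.indicator (steinWeiss α β lam ((ball 0 R).indicator f))) q volume ≤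
      ENNReal.ofReal (2 ^ lam) * (eLpNorm f p volume *
        eLpNorm (fun v => ‖v‖ ^ (-β)) p'
          (volume.restrict (ball (0 : EuclideanSpace ℝ (Fin N)) R))) *
        eLpNorm (fun u => ‖u‖ ^ (-(α + lam))) q
          (volume.restrict (ball (0 : EuclideanSpace ℝ (Fin N)) M)ᶜ) := by
  rw [eLpNorm_indicator_eq_eLpNorm_restrict measurableSet_ball.compl]
  have hmeas : Measurable fun u : EuclideanSpace ℝ (Fin N) => ‖u‖ ^ (-(α + lam)) := by fun_prop
  refine eLpNorm_le_mul_eLpNorm_of_ae_le_mul'' q hmeas.aestronglyMeasurable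
    (ae_restrict_of_forall_mem measurableSet_ball.compl fun u hu => ?_)
  have hMu : M ≤ ‖u‖ := by simpa using hu
  refine (enorm_steinWeiss_indicator_ball_le (p := p) (p' := p') hlam hR hf
    (hM.trans hMu)).trans_eq ?_
  rw [ENNReal.ofReal_mul (by positivity), Real.enorm_eq_ofReal (by positivity)]
  ring

theorem steinWeiss_uniform_decay_general (N : ℕ) (hN : 1 ≤ N) (p q lam α β p' : ℝ)
    (hp : 1 < p) (hpq : p ≤ q) (hp' : p' = p / (p - 1))
    (hlam0 : 0 < lam) (hβ : β < N / p') (halamq : (N : ℝ) < (α + lam) * q) :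
    ∀ R > (0 : ℝ),
      Tendsto (fun M : ℝ =>
          ⨆ (f : EuclideanSpace ℝ (Fin N) → ℝ)
            (_ : MemLp f (ENNReal.ofReal p) volume ∧
                 eLpNorm f (ENNReal.ofReal p) volume ≤ 1),
            eLpNorm
              ((Metric.ball (0 : EuclideanSpace ℝ (Fin N)) M)ᶜ.indicator
                (steinWeiss α β lam ((Metric.ball (0 : EuclideanSpace ℝ (Fin N)) R).indicator f)))
              (ENNReal.ofReal q) volume)
        atTop (nhds 0) := by
  intro R hR
  have hq : 0 < q := by linarith
  have hp'0 : 0 < p' := hp' ▸ div_pos (by linarith) (by linarith)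
  have hconj : p.HolderConjugate p' := by rw [hp']; exact .conjExponent hp
  have : (ENNReal.ofReal p).HolderConjugate (ENNReal.ofReal p') := hconj.ennrealOfReal
  set W := eLpNorm (fun v : EuclideanSpace ℝ (Fin N) => ‖v‖ ^ (-β)) (ENNReal.ofReal p')
    (volume.restrict (ball 0 R))
  have hW : W ≠ ∞ := (memLp_norm_rpow_neg_restrict_ball (by rwa [finrank_euclideanSpace_fin])
    (ofReal_pos.2 hp'0).ne' ofReal_ne_top
    (by rwa [toReal_ofReal hp'0.le, finrank_euclideanSpace_fin, ← lt_div_iff₀ hp'0])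
    R).eLpNorm_ne_top
  have htail := tendsto_eLpNorm_restrict_compl_ball (ofReal_pos.2 hq).ne' ofReal_ne_top
    (memLp_norm_rpow_neg_restrict_compl_ball (μ := volume) (t := α + lam) (r := 1)
      (ofReal_pos.2 hq).ne' ofReal_ne_top
      (by rwa [toReal_ofReal hq.le, finrank_euclideanSpace_fin]) one_pos)
  have hdecay := ENNReal.Tendsto.const_mul (a := ENNReal.ofReal (2 ^ lam) * W) htail
    (.inr (mul_ne_top ofReal_ne_top hW))
  rw [mul_zero] at hdecay
  refine tendsto_of_tendsto_of_tendsto_of_le_of_le' tendsto_const_nhds hdecay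
    (.of_forall fun _ => zero_le) ?_
  filter_upwards [eventually_ge_atTop (2 * R)] with M hM
  refine iSup₂_le fun f ⟨hf, hf1⟩ => ?_
  calc _ ≤ _ := eLpNorm_indicator_compl_ball_steinWeiss_le (p := ENNReal.ofReal p)
        (p' := ENNReal.ofReal p') hlam0.le hR hM _ hf.aestronglyMeasurable
    _ ≤ ENNReal.ofReal (2 ^ lam) * (1 * W) * _ := by gcongr
    _ = _ := by rw [one_mul]

/-- **Uniform decay of the image of compactly supported functions** (the paper's estimates
(2.5)–(2.6), Euclidean case). Let `N ≥ 1`, `1 < p ≤ q < ∞`, `0 < λ < N`, `β < N/p′` and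
`(α + λ) q > N`. Then for every fixed `R > 0`,
`lim_{M→∞} sup_{‖f‖_p ≤ 1} ‖S(f χ_{B(R)}) χ_{ℝ^N ∖ B(M)}‖_q = 0`. -/
theorem steinWeiss_uniform_decay (N : ℕ) (hN : 1 ≤ N) (p q lam α β p' : ℝ)
    (hp : 1 < p) (hpq : p ≤ q) (hp' : p' = p / (p - 1))
    (hlam0 : 0 < lam) (hlamN : lam < N) (hβ : β < N / p') (halamq : (N : ℝ) < (α + lam) * q) :
    ∀ R > (0 : ℝ),
      Tendsto (fun M : ℝ =>
          ⨆ (f : EuclideanSpace ℝ (Fin N) → ℝ)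
            (_ : MemLp f (ENNReal.ofReal p) volume ∧
                 eLpNorm f (ENNReal.ofReal p) volume ≤ 1),
            eLpNorm
              ((Metric.ball (0 : EuclideanSpace ℝ (Fin N)) M)ᶜ.indicator
                (steinWeiss α β lam ((Metric.ball (0 : EuclideanSpace ℝ (Fin N)) R).indicator f)))
              (ENNReal.ofReal q) volume)
        atTop (nhds 0) :=
  steinWeiss_uniform_decay_general N hN p q lam α β p' hp hpq hp' hlam0 hβ halamq
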